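/- Assume (H1), (H3), (H4), and that Π maps 𝔄(q) onto H⁻ for every q ∈ Q, so that the map Φ : Q × H⁻ → H is well-defined. If the driving system is the shift on ℝ, i.e. Q = ℝ and ϑ^t(q) = q + t for all t, q ∈ ℝ, then Φ is continuous. -/

import Mathlib

/-!
Fix `(q, ζ)` and the amenable trajectory `u` through `Φ q ζ`. For `(qₙ, ζₙ) → (q, ζ)`, shifting
the amenable trajectory through `Φ qₙ ζₙ` by `tₙ = qₙ - q` gives trajectories `vₙ` over the same
base point `q`. Integrating (H3) for `vₙ - u` from `-∞` (amenability kills the boundary term) up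
to `tₙ`, and bounding `V` from below by `-‖P‖ |Π ·|²` using (H1), the weighted `L²` norm of
`vₙ - u` on `[-2, -1]` is at most `‖P‖ e^{2ν tₙ} |ζₙ - Π u(tₙ)|² → 0`. So `vₙ - u → 0` at some
times `τₙ ∈ [-2, -1]`, and flowing forward from `τₙ` with the continuous cocycle gives
`Φ qₙ ζₙ = vₙ(tₙ) → u(0) = Φ q ζ`.
-/

open MeasureTheory Set Bornology Filter Topology RealInnerProductSpace

noncomputable section

variable {Q H : Type*}

section Defs
variable [MetricSpace Q] [NormedAddCommGroup H] [InnerProductSpace ℝ H] [CompleteSpace H]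

def IsFlow (ϑ : ℝ → Q → Q) : Prop :=
  (∀ q, ϑ 0 q = q) ∧ (∀ t s q, ϑ (t + s) q = ϑ t (ϑ s q)) ∧
    Continuous fun p : ℝ × Q => ϑ p.1 p.2

def IsCocycle (ϑ : ℝ → Q → Q) (ψ : ℝ → Q → H → H) : Prop :=
  (∀ q u, ψ 0 q u = u) ∧
  (∀ t s : ℝ, 0 ≤ t → 0 ≤ s → ∀ q u, ψ (t + s) q u = ψ t (ϑ s q) (ψ s q u)) ∧
  ContinuousOn (fun p : ℝ × Q × H => ψ p.1 p.2.1 p.2.2) {p : ℝ × Q × H | 0 ≤ p.1}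

def IsCompleteTraj (ϑ : ℝ → Q → Q) (ψ : ℝ → Q → H → H) (q : Q) (u : ℝ → H) : Prop :=
  Continuous u ∧ ∀ t s : ℝ, 0 ≤ t → u (t + s) = ψ t (ϑ s q) (u s)

def IsAmenable (ν : ℝ) (u : ℝ → H) : Prop :=
  IntegrableOn (fun s : ℝ => Real.exp (2 * ν * s) * ‖u s‖ ^ 2) (Set.Iic (0:ℝ))

def amenSet (ϑ : ℝ → Q → Q) (ψ : ℝ → Q → H → H) (ν : ℝ) (q : Q) : Set H :=
  {u₀ | ∃ u : ℝ → H, IsCompleteTraj ϑ ψ q u ∧ IsAmenable ν u ∧ u 0 = u₀}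

structure HypH1 (P : H →L[ℝ] H) (Hplus Hminus : Submodule ℝ H) : Prop where
  selfAdj : IsSelfAdjoint P
  closed_plus : IsClosed (Hplus : Set H)
  orth : Hminus = Hplusᗮ
  inv_plus : ∀ u ∈ Hplus, P u ∈ Hplus
  inv_minus : ∀ u ∈ Hminus, P u ∈ Hminus
  pos : ∀ u ∈ Hplus, u ≠ 0 → (0:ℝ) < ⟪P u, u⟫
  neg : ∀ u ∈ Hminus, u ≠ 0 → ⟪P u, u⟫ < 0

def HypH2 (Hminus : Submodule ℝ H) (j : ℕ) : Prop :=
  FiniteDimensional ℝ Hminus ∧ Module.finrank ℝ Hminus = j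

def HypH3 (ψ : ℝ → Q → H → H) (P : H →L[ℝ] H) (δ ν : ℝ) : Prop :=
  0 < δ ∧ 0 < ν ∧ ∀ (q : Q) (u v : H) (l r : ℝ), 0 ≤ l → l ≤ r →
    Real.exp (2 * ν * r) * ⟪P (ψ r q u - ψ r q v), ψ r q u - ψ r q v⟫ -
      Real.exp (2 * ν * l) * ⟪P (ψ l q u - ψ l q v), ψ l q u - ψ l q v⟫ ≤
      -δ * ∫ s in l..r, Real.exp (2 * ν * s) * ‖ψ s q u - ψ s q v‖ ^ 2

def IsOrthProjOnto (Hminus : Submodule ℝ H) (Pi : H →L[ℝ] H) : Prop :=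
  (∀ u, Pi u ∈ Hminus) ∧ ∀ u, u - Pi u ∈ Hminusᗮ

def HypCOM2 (ψ : ℝ → Q → H → H) : Prop :=
  ∃ tc : ℝ, 0 < tc ∧ ∀ (q : Q) (s : Set H), IsBounded s → IsCompact (closure (ψ tc q '' s))

def HypCOM3 (ψ : ℝ → Q → H → H) : Prop :=
  ∀ (q : Q) (u₀ : H), IsBounded ((fun t => ψ t q u₀) '' Set.Ici (0:ℝ)) →
    IsCompact (closure ((fun t => ψ t q u₀) '' Set.Ici (0:ℝ)))

def LyapunovStable (ψ : ℝ → Q → H → H) (q : Q) (v : ℝ → H) : Prop :=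
  ∀ ε > 0, ∃ η > 0, ∀ u₀ : H, ‖u₀ - v 0‖ < η → ∀ t ≥ 0, ‖ψ t q u₀ - v t‖ < ε

end Defs

def circleFlow (σ : ℝ) : ℝ → AddCircle σ → AddCircle σ := fun t θ => θ + (t : AddCircle σ)

lemma abs_inner_map_self_le {E : Type*} [NormedAddCommGroup E] [InnerProductSpace ℝ E]
    (P : E →L[ℝ] E) (x : E) : |⟪P x, x⟫| ≤ ‖P‖ * ‖x‖ ^ 2 :=
  calc |⟪P x, x⟫| ≤ ‖P x‖ * ‖x‖ := abs_real_inner_le_norm _ _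
    _ ≤ ‖P‖ * ‖x‖ * ‖x‖ := by gcongr; exact P.le_opNorm x
    _ = ‖P‖ * ‖x‖ ^ 2 := by ring

lemma HypH1.neg_opNorm_mul_sq_le [NormedAddCommGroup H] [InnerProductSpace ℝ H] [CompleteSpace H]
    {P : H →L[ℝ] H} {Hplus Hminus : Submodule ℝ H} (h1 : HypH1 P Hplus Hminus)
    {Pi : H →L[ℝ] H} (hPi : IsOrthProjOnto Hminus Pi) (w : H) :
    -(‖P‖ * ‖Pi w‖ ^ 2) ≤ ⟪P w, w⟫ := by
  set a := w - Pi w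
  set b := Pi w
  have hb : b ∈ Hminus := hPi.1 w
  have ha : a ∈ Hplus := by
    have := hPi.2 w
    rwa [h1.orth, Submodule.orthogonal_orthogonal_eq_closure,
      h1.closed_plus.submodule_topologicalClosure_eq] at this
  have hab : ⟪P a, b⟫ = 0 :=
    (Submodule.mem_orthogonal _ b).1 (h1.orth ▸ hb) (P a) (h1.inv_plus a ha)
  have hba : ⟪P b, a⟫ = 0 := (Submodule.mem_orthogonal _ a).1 (hPi.2 w) (P b) (h1.inv_minus b hb)
  have hsplit : ⟪P w, w⟫ = ⟪P a, a⟫ + ⟪P b, b⟫ := by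
    rw [show w = a + b by simp [a, b], map_add, inner_add_left, inner_add_right,
      inner_add_right, hab, hba]
    ring
  have hpos : 0 ≤ ⟪P a, a⟫ := by
    rcases eq_or_ne a 0 with h | h
    · simp [h]
    · exact (h1.pos a ha h).le
  have hneg := neg_abs_le ⟪P b, b⟫
  linarith [abs_inner_map_self_le P b]

lemma IntegrableOn.frequently_atBot_lt {f : ℝ → ℝ} {c : ℝ} (hf : IntegrableOn f (Iic c))
    {ε : ℝ} (hε : 0 < ε) : ∃ᶠ s in atBot, f s < ε := by
  rw [frequently_atBot]
  intro a
  by_contra! h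
  have hconst : IntegrableOn (fun _ => ε) (Iic (min a c)) := by
    refine (hf.mono_set (Iic_subset_Iic.2 (min_le_right a c))).mono' aestronglyMeasurable_const ?_
    filter_upwards [ae_restrict_mem measurableSet_Iic] with s hs
    rw [Real.norm_eq_abs, abs_of_pos hε]
    exact h s (hs.trans (min_le_left a c))
  rw [integrableOn_const_iff, Real.volume_Iic] at hconst
  simp [hε.ne'] at hconst

lemma exists_mem_Icc_mul_le_intervalIntegral {g : ℝ → ℝ} {a b : ℝ} (hab : a ≤ b)
    (hg : ContinuousOn g (Icc a b)) : ∃ τ ∈ Icc a b, (b - a) * g τ ≤ ∫ σ in a..b, g σ := by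
  obtain ⟨τ, hτ, hmin⟩ := isCompact_Icc.exists_isMinOn (nonempty_Icc.2 hab) hg
  refine ⟨τ, hτ, ?_⟩
  have := intervalIntegral.integral_mono_on hab (intervalIntegrable_const (μ := volume))
    (hg.intervalIntegrable_of_Icc hab) fun σ hσ => hmin hσ
  simpa using this

lemma exists_seq_mem_Icc_tendsto_zero {f : ℕ → ℝ → ℝ} {a b : ℝ} (hab : a < b)
    (hf : ∀ n, ContinuousOn (f n) (Icc a b)) (hnn : ∀ n, ∀ σ ∈ Icc a b, 0 ≤ f n σ)
    (hlim : Tendsto (fun n => ∫ σ in a..b, f n σ) atTop (𝓝 0)) :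
    ∃ τ : ℕ → ℝ, (∀ n, τ n ∈ Icc a b) ∧ Tendsto (fun n => f n (τ n)) atTop (𝓝 0) := by
  choose τ hτ hle using fun n => exists_mem_Icc_mul_le_intervalIntegral hab.le (hf n)
  refine ⟨τ, hτ, squeeze_zero (g := fun n => (∫ σ in a..b, f n σ) / (b - a))
    (fun n => hnn n _ (hτ n)) (fun n => ?_) ?_⟩
  · exact (le_div_iff₀' (sub_pos.2 hab)).2 (hle n)
  · simpa using hlim.div_const (b - a)

open scoped Uniformity in
lemma IsCompact.tendsto_uniformity_map {α β ι : Type*} [UniformSpace α] [UniformSpace β]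
    {K : Set α} (hK : IsCompact K) {f : α → β} (hf : ∀ a ∈ K, ContinuousAt f a)
    {l : Filter ι} {x y : ι → α} (hy : ∀ i, y i ∈ K) (hxy : Tendsto (fun i => (y i, x i)) l (𝓤 α)) :
    Tendsto (fun i => (f (y i), f (x i))) l (𝓤 β) := fun _ hr =>
  mem_map.2 <| mem_of_superset (hxy (hK.uniformContinuousAt_of_continuousAt f hf hr))
    fun i hi => hi (hy i)

section Trajectories
variable [NormedAddCommGroup H]
  {ϑ : ℝ → Q → Q} {ψ : ℝ → Q → H → H} {q : Q} {ν : ℝ}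

lemma isFlow_shift : IsFlow (fun t q : ℝ => q + t) :=
  ⟨add_zero, fun t s q => by ring, by fun_prop⟩

lemma IsCompleteTraj.comp_sub [MetricSpace Q] (hϑ : IsFlow ϑ) {u : ℝ → H} (c : ℝ)
    (hu : IsCompleteTraj ϑ ψ (ϑ c q) u) : IsCompleteTraj ϑ ψ q (fun s => u (s - c)) := by
  refine ⟨hu.1.comp (continuous_sub_right c), fun t s ht => ?_⟩
  show u (t + s - c) = ψ t (ϑ s q) (u (s - c))
  rw [add_sub_assoc, hu.2 t (s - c) ht, ← hϑ.2.1, sub_add_cancel]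

lemma IsAmenable.comp_sub {u : ℝ → H} (hu : Continuous u) (huA : IsAmenable ν u) (c : ℝ) :
    IsAmenable ν (fun s => u (s - c)) := by
  set f : ℝ → ℝ := fun s => Real.exp (2 * ν * s) * ‖u s‖ ^ 2
  have hf : Continuous f := by fun_prop
  have hfc : IntegrableOn f (Iic (-c)) :=
    (huA.union hf.continuousOn.integrableOn_Icc).mono_set Iic_subset_Iic_union_Icc
  have hshift : IntegrableOn (fun s => f (s - c)) (Iic 0) := by
    have := ((measurePreserving_sub_right volume c).integrableOn_comp_preimage
      (measurableEmbedding_subRight c)).2 hfc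
    rwa [preimage_sub_const_Iic, neg_add_cancel] at this
  refine IntegrableOn.congr_fun (hshift.const_mul (Real.exp (2 * ν * c))) (fun s _ => ?_)
    measurableSet_Iic
  simp only [f, ← mul_assoc, ← Real.exp_add]
  ring_nf

lemma IsAmenable.sub {u v : ℝ → H} (hu : Continuous u) (hv : Continuous v)
    (huA : IsAmenable ν u) (hvA : IsAmenable ν v) : IsAmenable ν (u - v) := by
  refine ((huA.add hvA).const_mul 2).mono' (by fun_prop : Continuous _).aestronglyMeasurable
    (Eventually.of_forall fun s => ?_)
  have hsq : ‖u s - v s‖ ^ 2 ≤ 2 * (‖u s‖ ^ 2 + ‖v s‖ ^ 2) := by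
    nlinarith [norm_sub_le (u s) (v s), norm_nonneg (u s - v s), sq_nonneg (‖u s‖ - ‖v s‖)]
  rw [Real.norm_eq_abs, abs_of_nonneg (by positivity)]
  have := mul_le_mul_of_nonneg_left hsq (Real.exp_pos (2 * ν * s)).le
  simp only [Pi.add_apply, Pi.sub_apply]
  linarith

open scoped Uniformity in
/-- `u 0` and `v n (t n)` are reached by flowing from time `τ n` for the time `-τ n ≥ -b > 0`
resp. `t n - τ n`; `ψ` is continuous near these interior points, uniformly so by compactness. -/
lemma IsCompleteTraj.tendsto_of_tendsto_sub [MetricSpace Q] (hϑ : IsFlow ϑ)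
    (hψ : IsCocycle ϑ ψ) {u : ℝ → H} (hu : IsCompleteTraj ϑ ψ q u) {v : ℕ → ℝ → H}
    (hv : ∀ n, IsCompleteTraj ϑ ψ q (v n)) {a b : ℝ} (hb : b < 0) {τ t : ℕ → ℝ}
    (hτ : ∀ n, τ n ∈ Icc a b) (ht : Tendsto t atTop (𝓝 0))
    (hw : Tendsto (fun n => v n (τ n) - u (τ n)) atTop (𝓝 0)) :
    Tendsto (fun n => v n (t n)) atTop (𝓝 (u 0)) := by
  set F : ℝ × Q × H → H := fun p => ψ p.1 p.2.1 p.2.2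
  set γ : ℝ → ℝ × Q × H := fun σ => (-σ, ϑ σ q, u σ)
  have hγ : Continuous γ :=
    continuous_neg.prodMk ((hϑ.2.2.comp (continuous_id.prodMk continuous_const)).prodMk hu.1)
  have hF : ∀ p ∈ γ '' Icc a b, ContinuousAt F p := by
    rintro _ ⟨σ, hσ, rfl⟩
    refine hψ.2.2.continuousAt (mem_of_superset
      ((isOpen_lt continuous_const continuous_fst).mem_nhds (show (0 : ℝ) < -σ by linarith [hσ.2]))
      fun p hp => (show (0 : ℝ) < p.1 from hp).le)
  have hFu : ∀ σ ≤ 0, F (γ σ) = u 0 := fun σ hσ => by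
    simpa using (hu.2 (-σ) σ (neg_nonneg.2 hσ)).symm
  have hFv : ∀ᶠ n in atTop, F (t n - τ n, ϑ (τ n) q, v n (τ n)) = v n (t n) := by
    filter_upwards [ht.eventually (eventually_gt_nhds hb)] with n hn
    have := (hv n).2 (t n - τ n) (τ n) (by linarith [(hτ n).2])
    rwa [sub_add_cancel, eq_comm] at this
  have hclose : Tendsto (fun n => (γ (τ n), (t n - τ n, ϑ (τ n) q, v n (τ n)))) atTop (𝓤 _) := by
    rw [tendsto_uniformity_iff_dist_tendsto_zero]
    refine squeeze_zero (fun _ => dist_nonneg) (fun n => ?_) (by simpa using ht.abs.add hw.norm)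
    simp only [γ, Prod.dist_eq, dist_self, dist_eq_norm, norm_sub_rev (u _)]
    rw [show -τ n - (t n - τ n) = -t n by ring, norm_neg, Real.norm_eq_abs]
    exact max_le (le_add_of_nonneg_right (norm_nonneg _))
      (max_le (by positivity) (le_add_of_nonneg_left (abs_nonneg _)))
  have := (isCompact_Icc.image hγ).tendsto_uniformity_map hF
    (fun n => mem_image_of_mem γ (hτ n)) hclose
  rw [tendsto_uniformity_iff_dist_tendsto_zero] at this
  refine tendsto_const_nhds.congr_dist (this.congr' ?_)
  filter_upwards [hFv] with n hn
  rw [hn, hFu _ ((hτ n).2.trans hb.le)]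

variable [InnerProductSpace ℝ H] {P : H →L[ℝ] H} {δ : ℝ}

lemma IsCompleteTraj.energy_sub_le (h3 : HypH3 ψ P δ ν) {u v : ℝ → H}
    (hu : IsCompleteTraj ϑ ψ q u) (hv : IsCompleteTraj ϑ ψ q v) {s t : ℝ} (hst : s ≤ t) :
    Real.exp (2 * ν * t) * ⟪P (u t - v t), u t - v t⟫ -
      Real.exp (2 * ν * s) * ⟪P (u s - v s), u s - v s⟫ ≤
      -δ * ∫ σ in s..t, Real.exp (2 * ν * σ) * ‖u σ - v σ‖ ^ 2 := by
  have key := h3.2.2 (ϑ s q) (u s) (v s) 0 (t - s) le_rfl (sub_nonneg.2 hst)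
  have hu' : ∀ σ, 0 ≤ σ → ψ σ (ϑ s q) (u s) = u (σ + s) := fun σ hσ => (hu.2 σ s hσ).symm
  have hv' : ∀ σ, 0 ≤ σ → ψ σ (ϑ s q) (v s) = v (σ + s) := fun σ hσ => (hv.2 σ s hσ).symm
  have hint : ∫ σ in (0 : ℝ)..t - s, Real.exp (2 * ν * σ) *
        ‖ψ σ (ϑ s q) (u s) - ψ σ (ϑ s q) (v s)‖ ^ 2 =
      Real.exp (-(2 * ν * s)) * ∫ σ in s..t, Real.exp (2 * ν * σ) * ‖u σ - v σ‖ ^ 2 := by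
    rw [intervalIntegral.integral_congr (g := fun σ => Real.exp (-(2 * ν * s)) *
      (Real.exp (2 * ν * (σ + s)) * ‖u (σ + s) - v (σ + s)‖ ^ 2)),
      intervalIntegral.integral_const_mul, intervalIntegral.integral_comp_add_right
        (fun σ => Real.exp (2 * ν * σ) * ‖u σ - v σ‖ ^ 2), zero_add, sub_add_cancel]
    intro σ hσ
    rw [uIcc_of_le (sub_nonneg.2 hst)] at hσ
    simp only [hu' σ hσ.1, hv' σ hσ.1, ← mul_assoc, ← Real.exp_add]
    ring_nf
  rw [hint, hu' _ le_rfl, hv' _ le_rfl, hu' _ (sub_nonneg.2 hst), hv' _ (sub_nonneg.2 hst),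
    zero_add, sub_add_cancel] at key
  have hscale := mul_le_mul_of_nonneg_left key (Real.exp_pos (2 * ν * s)).le
  have he : Real.exp (2 * ν * s) * Real.exp (2 * ν * (t - s)) = Real.exp (2 * ν * t) := by
    rw [← Real.exp_add]; ring_nf
  have he' : Real.exp (2 * ν * s) * Real.exp (-(2 * ν * s)) = 1 := by
    rw [← Real.exp_add]; simp
  calc _ = Real.exp (2 * ν * s) * (Real.exp (2 * ν * (t - s)) * ⟪P (u t - v t), u t - v t⟫ -
        Real.exp (2 * ν * 0) * ⟪P (u s - v s), u s - v s⟫) := by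
          rw [mul_zero, Real.exp_zero, mul_sub, ← mul_assoc, he]; ring
    _ ≤ _ := hscale
    _ = _ := by rw [mul_left_comm, ← mul_assoc (Real.exp _), he', one_mul]

lemma IsCompleteTraj.integral_le_neg_energy (h3 : HypH3 ψ P δ ν) {u v : ℝ → H}
    (hu : IsCompleteTraj ϑ ψ q u) (hv : IsCompleteTraj ϑ ψ q v)
    (huA : IsAmenable ν u) (hvA : IsAmenable ν v) {l T : ℝ} (hlT : l ≤ T) :
    δ * ∫ σ in l..T, Real.exp (2 * ν * σ) * ‖u σ - v σ‖ ^ 2 ≤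
      -(Real.exp (2 * ν * T) * ⟪P (u T - v T), u T - v T⟫) := by
  have hw : Continuous fun σ => u σ - v σ := hu.1.sub hv.1
  refine le_of_forall_pos_le_add fun ε hε => ?_
  obtain ⟨s, hsε, hsl⟩ := ((IntegrableOn.frequently_atBot_lt
    ((huA.sub hu.1 hv.1 hvA).const_mul ‖P‖) hε).and_eventually (eventually_le_atBot l)).exists
  have hmono : ∫ σ in l..T, Real.exp (2 * ν * σ) * ‖u σ - v σ‖ ^ 2 ≤
      ∫ σ in s..T, Real.exp (2 * ν * σ) * ‖u σ - v σ‖ ^ 2 :=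
    intervalIntegral.integral_mono_interval hsl hlT le_rfl
      (Eventually.of_forall fun σ => by positivity)
      (Continuous.intervalIntegrable (by fun_prop) _ _)
  have hVs : Real.exp (2 * ν * s) * ⟪P (u s - v s), u s - v s⟫ ≤
      ‖P‖ * (Real.exp (2 * ν * s) * ‖u s - v s‖ ^ 2) := by
    rw [mul_left_comm]
    exact mul_le_mul_of_nonneg_left ((le_abs_self _).trans (abs_inner_map_self_le P _))
      (Real.exp_pos _).le
  have henergy := hu.energy_sub_le h3 hv (hsl.trans hlT)
  have := mul_le_mul_of_nonneg_left hmono h3.1.le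
  simp only [Pi.sub_apply] at hsε
  linarith

variable [CompleteSpace H] {Hplus Hminus : Submodule ℝ H} {Pi : H →L[ℝ] H}
  {u : ℝ → H} {v : ℕ → ℝ → H} {t : ℕ → ℝ}

lemma IsCompleteTraj.tendsto_intervalIntegral_of_tendsto_proj (h1 : HypH1 P Hplus Hminus)
    (h3 : HypH3 ψ P δ ν) (hPi : IsOrthProjOnto Hminus Pi) (hu : IsCompleteTraj ϑ ψ q u)
    (huA : IsAmenable ν u) (hv : ∀ n, IsCompleteTraj ϑ ψ q (v n))
    (hvA : ∀ n, IsAmenable ν (v n)) (ht : Tendsto t atTop (𝓝 0))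
    (hproj : Tendsto (fun n => Pi (v n (t n) - u (t n))) atTop (𝓝 0))
    {l r : ℝ} (hlr : l ≤ r) (hr : r < 0) :
    Tendsto (fun n => ∫ σ in l..r, Real.exp (2 * ν * σ) * ‖v n σ - u σ‖ ^ 2) atTop (𝓝 0) := by
  have hbound : Tendsto (fun n => Real.exp (2 * ν * t n) *
      (‖P‖ * ‖Pi (v n (t n) - u (t n))‖ ^ 2) / δ) atTop (𝓝 0) := by
    simpa using (((Real.continuous_exp.tendsto _).comp (ht.const_mul (2 * ν))).mul
      ((hproj.norm.pow 2).const_mul ‖P‖)).div_const δ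
  refine squeeze_zero' (Eventually.of_forall fun n =>
    intervalIntegral.integral_nonneg hlr fun σ _ => by positivity) ?_ hbound
  filter_upwards [ht.eventually (eventually_gt_nhds hr)] with n hn
  have hw : Continuous fun σ => v n σ - u σ := (hv n).1.sub hu.1
  rw [le_div_iff₀' h3.1]
  calc δ * ∫ σ in l..r, Real.exp (2 * ν * σ) * ‖v n σ - u σ‖ ^ 2
      ≤ δ * ∫ σ in l..t n, Real.exp (2 * ν * σ) * ‖v n σ - u σ‖ ^ 2 := by
        refine mul_le_mul_of_nonneg_left ?_ h3.1.le
        exact intervalIntegral.integral_mono_interval le_rfl hlr hn.le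
          (Eventually.of_forall fun σ => by positivity)
          (Continuous.intervalIntegrable (by fun_prop) _ _)
    _ ≤ -(Real.exp (2 * ν * t n) * ⟪P (v n (t n) - u (t n)), v n (t n) - u (t n)⟫) :=
        (hv n).integral_le_neg_energy h3 hu (hvA n) huA (hlr.trans hn.le)
    _ ≤ Real.exp (2 * ν * t n) * (‖P‖ * ‖Pi (v n (t n) - u (t n))‖ ^ 2) := by
        nlinarith [h1.neg_opNorm_mul_sq_le hPi (v n (t n) - u (t n)), Real.exp_pos (2 * ν * t n)]

theorem IsCompleteTraj.tendsto_of_tendsto_proj [MetricSpace Q] (hϑ : IsFlow ϑ)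
    (hψ : IsCocycle ϑ ψ) (h1 : HypH1 P Hplus Hminus) (h3 : HypH3 ψ P δ ν)
    (hPi : IsOrthProjOnto Hminus Pi) (hu : IsCompleteTraj ϑ ψ q u) (huA : IsAmenable ν u)
    (hv : ∀ n, IsCompleteTraj ϑ ψ q (v n)) (hvA : ∀ n, IsAmenable ν (v n))
    (ht : Tendsto t atTop (𝓝 0))
    (hproj : Tendsto (fun n => Pi (v n (t n) - u (t n))) atTop (𝓝 0)) :
    Tendsto (fun n => v n (t n)) atTop (𝓝 (u 0)) := by
  have hint := hu.tendsto_intervalIntegral_of_tendsto_proj h1 h3 hPi huA hv hvA ht hproj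
    (by norm_num : (-2 : ℝ) ≤ -1) (by norm_num)
  have hcont : ∀ n, Continuous fun σ => Real.exp (2 * ν * σ) * ‖v n σ - u σ‖ ^ 2 := fun n => by
    have : Continuous fun σ => v n σ - u σ := (hv n).1.sub hu.1
    fun_prop
  obtain ⟨τ, hτ, hτ0⟩ := exists_seq_mem_Icc_tendsto_zero (by norm_num : (-2 : ℝ) < -1)
    (fun n => (hcont n).continuousOn) (fun n σ _ => by positivity) hint
  refine hu.tendsto_of_tendsto_sub hϑ hψ hv (by norm_num : (-1 : ℝ) < 0) hτ ht ?_
  have hsq : Tendsto (fun n => ‖v n (τ n) - u (τ n)‖ ^ 2) atTop (𝓝 0) := by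
    refine squeeze_zero (fun n => by positivity) (fun n => ?_)
      (by simpa using hτ0.const_mul (Real.exp (4 * ν)))
    rw [← mul_assoc, ← Real.exp_add]
    refine le_mul_of_one_le_left (by positivity) (Real.one_le_exp ?_)
    nlinarith [(hτ n).1, h3.2.1]
  rw [tendsto_zero_iff_norm_tendsto_zero]
  simpa [Real.sqrt_sq (norm_nonneg _)] using hsq.sqrt

end Trajectories

theorem Phi_continuous_shift_flow_general
    {H : Type*} [NormedAddCommGroup H] [InnerProductSpace ℝ H]
    [CompleteSpace H]
    (ψ : ℝ → ℝ → H → H)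
    (hcoc : IsCocycle (fun t q => q + t) ψ)
    (P : H →L[ℝ] H) (Hplus Hminus : Submodule ℝ H)
    (h1 : HypH1 P Hplus Hminus)
    (δ ν : ℝ) (h3 : HypH3 ψ P δ ν)
    (Pi : H →L[ℝ] H) (hPi : IsOrthProjOnto Hminus Pi)
    (Φ : ℝ → ↥Hminus → H)
    (hΦmem : ∀ (q : ℝ) (ζ : ↥Hminus), Φ q ζ ∈ amenSet (fun t q => q + t) ψ ν q)
    (hΦproj : ∀ (q : ℝ) (ζ : ↥Hminus), Pi (Φ q ζ) = (ζ : H)) :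
    Continuous fun p : ℝ × ↥Hminus => Φ p.1 p.2 := by
  rw [continuous_iff_seqContinuous]
  intro p p₀ hp
  obtain ⟨u, hu, huA, hu0⟩ := hΦmem p₀.1 p₀.2
  choose v hv hvA hv0 using fun n => hΦmem (p n).1 (p n).2
  set t : ℕ → ℝ := fun n => (p n).1 - p₀.1
  have ht : Tendsto t atTop (𝓝 0) := by
    simpa using ((continuous_fst.tendsto p₀).comp hp).sub_const p₀.1
  have hshift : ∀ n, IsCompleteTraj (fun t q => q + t) ψ p₀.1 (fun s => v n (s - t n)) :=
    fun n => IsCompleteTraj.comp_sub isFlow_shift (t n) (by simpa [t] using hv n)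
  have hproj : Tendsto (fun n => Pi (v n (t n - t n) - u (t n))) atTop (𝓝 0) := by
    have hζ : Tendsto (fun n => ((p n).2 : H)) atTop (𝓝 p₀.2) :=
      ((continuous_subtype_val.comp continuous_snd).tendsto p₀).comp hp
    simpa [hv0, hu0, hΦproj] using
      hζ.sub ((Pi.continuous.tendsto _).comp ((hu.1.tendsto 0).comp ht))
  simpa [hv0, hu0, Function.comp_def] using hu.tendsto_of_tendsto_proj isFlow_shift hcoc h1 h3 hPi
    huA hshift (fun n => (hvA n).comp_sub (hv n).1 (t n)) ht hproj

/-- Proposition 1: under (H1), (H3), (H4), if `Π` maps each amenable set onto `H⁻` and the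
driving system is the shift flow on `ℝ`, then the map `Φ` (sending `(q, ζ)` to the unique
point of `𝔄(q)` projecting to `ζ`) is continuous. -/
theorem Phi_continuous_shift_flow
    {H : Type*} [NormedAddCommGroup H] [InnerProductSpace ℝ H]
    [CompleteSpace H] [TopologicalSpace.SeparableSpace H]
    (ψ : ℝ → ℝ → H → H)
    (hcoc : IsCocycle (fun t q => q + t) ψ)
    (P : H →L[ℝ] H) (Hplus Hminus : Submodule ℝ H)
    (h1 : HypH1 P Hplus Hminus)
    (δ ν : ℝ) (h3 : HypH3 ψ P δ ν)
    (h4 : ∀ q : ℝ, (amenSet (fun t q => q + t) ψ ν q).Nonempty)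
    (Pi : H →L[ℝ] H) (hPi : IsOrthProjOnto Hminus Pi)
    (honto : ∀ q : ℝ, Pi '' (amenSet (fun t q => q + t) ψ ν q) = (Hminus : Set H))
    (Φ : ℝ → ↥Hminus → H)
    (hΦmem : ∀ (q : ℝ) (ζ : ↥Hminus), Φ q ζ ∈ amenSet (fun t q => q + t) ψ ν q)
    (hΦproj : ∀ (q : ℝ) (ζ : ↥Hminus), Pi (Φ q ζ) = (ζ : H)) :
    Continuous fun p : ℝ × ↥Hminus => Φ p.1 p.2 :=
  Phi_continuous_shift_flow_general ψ hcoc P Hplus Hminus h1 δ ν h3 Pi hPi Φ hΦmem hΦproj
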